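/- There exist equivalence relations E and F such that there are injective reductions from E to F and from F to E (E and F are bi-embeddable), but there is no reduction from E to F with F-invariant range. Explicitly, let E have ℵ₀ many classes of size ℵ₀ and one class of size 1, and let F have ℵ₀ many classes of size ℵ₀ and one class of size 2 (and no other classes). -/

import Mathlib

/-!
Both relations are "a block of `α` plus `ℵ₀` blocks of size `ℵ₀`", and such relations embed into
each other: keep the `α`-block when `α` embeds into `β`, or send it into a fresh infinite block when
`α` is countable. An invariant reduction, however, maps each class onto a whole class, so it would
send the singleton class of `E` onto a singleton class of `F`, and `F` has none.
-/

/-- A set with `ℵ₀` many classes of size `ℵ₀` (the `Sum.inr` part, grouped by first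
coordinate) and one class of size 1 (the `Sum.inl` part). -/
def X16 : Type := Unit ⊕ (ℕ × ℕ)

/-- A set with `ℵ₀` many classes of size `ℵ₀` (the `Sum.inr` part, grouped by first
coordinate) and one class of size 2 (the `Sum.inl` part). -/
def Y16 : Type := Fin 2 ⊕ (ℕ × ℕ)

def E16 : X16 → X16 → Prop
  | Sum.inl _, Sum.inl _ => True
  | Sum.inr p, Sum.inr q => p.1 = q.1
  | _, _ => False

def F16 : Y16 → Y16 → Prop
  | Sum.inl _, Sum.inl _ => True
  | Sum.inr p, Sum.inr q => p.1 = q.1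
  | _, _ => False

open Function Set

theorem eq_of_invariant_range_of_singleton_class {α β : Type*} {r : α → α → Prop}
    {s : β → β → Prop} {f : α → β} (hf : ∀ a a', s (f a) (f a') → r a a')
    (hinv : ∀ b b', b ∈ range f → s b b' → b' ∈ range f) {a : α} (ha : ∀ a', r a a' → a' = a)
    {b : β} (hb : s (f a) b) : b = f a := by
  obtain ⟨a', rfl⟩ := hinv _ _ ⟨a, rfl⟩ hb
  rw [ha a' (hf a a' hb)]

def blockIndex {α : Type*} : α ⊕ (ℕ × ℕ) → Option ℕ :=
  Sum.elim (fun _ => none) (fun p => some p.1)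

def BlockRel (α : Type*) (x y : α ⊕ (ℕ × ℕ)) : Prop :=
  blockIndex x = blockIndex y

namespace BlockRel

variable {α β : Type*}

theorem equivalence : Equivalence (BlockRel α) :=
  ⟨fun _ => rfl, Eq.symm, Eq.trans⟩

@[simp]
theorem inl_inl (a b : α) : BlockRel α (.inl a) (.inl b) := rfl

@[simp]
theorem inr_inr_iff (p q : ℕ × ℕ) : BlockRel α (.inr p) (.inr q) ↔ p.1 = q.1 := by
  simp [BlockRel, blockIndex]

@[simp]
theorem not_inl_inr (a : α) (p : ℕ × ℕ) : ¬ BlockRel α (.inl a) (.inr p) := by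
  simp [BlockRel, blockIndex]

@[simp]
theorem not_inr_inl (p : ℕ × ℕ) (a : α) : ¬ BlockRel α (.inr p) (.inl a) := by
  simp [BlockRel, blockIndex]

def sumMapEmbedding (f : α ↪ β) : BlockRel α ↪r BlockRel β where
  toFun := Sum.map f id
  inj' := f.injective.sumMap injective_id
  map_rel_iff' := by rintro (a | p) (b | q) <;> simp

def shiftBlocks (f : α → ℕ) : α ⊕ (ℕ × ℕ) → β ⊕ (ℕ × ℕ) :=
  Sum.elim (fun a => .inr (0, f a)) (fun p => .inr (p.1 + 1, p.2))

theorem shiftBlocks_injective {f : α → ℕ} (hf : Injective f) :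
    Injective (shiftBlocks f : α ⊕ (ℕ × ℕ) → β ⊕ (ℕ × ℕ)) := by
  rintro (a | p) (b | q) h <;> simp_all [shiftBlocks, Prod.ext_iff, hf.eq_iff]

def shiftEmbedding (f : α ↪ ℕ) : BlockRel α ↪r BlockRel β where
  toFun := shiftBlocks f
  inj' := shiftBlocks_injective f.injective
  map_rel_iff' := by rintro (a | p) (b | q) <;> simp [shiftBlocks]

theorem eq_of_inl_rel [Subsingleton α] {a : α} {x : α ⊕ (ℕ × ℕ)} (h : BlockRel α (.inl a) x) :
    x = .inl a := by
  rcases x with b | p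
  · rw [Subsingleton.elim b a]
  · exact absurd h (not_inl_inr a p)

theorem exists_rel_ne [Nontrivial α] (x : α ⊕ (ℕ × ℕ)) : ∃ y, BlockRel α x y ∧ y ≠ x := by
  rcases x with a | p
  · obtain ⟨b, hb⟩ := exists_ne a
    exact ⟨.inl b, inl_inl a b, by simpa using hb⟩
  · exact ⟨.inr (p.1, p.2 + 1), by simp, by simp [Prod.ext_iff]⟩

theorem not_exists_invariant_reduction [Unique α] [Nontrivial β] :
    ¬ ∃ f : α ⊕ (ℕ × ℕ) → β ⊕ (ℕ × ℕ), (∀ x x', BlockRel α x x' ↔ BlockRel β (f x) (f x')) ∧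
      ∀ y y', y ∈ range f → BlockRel β y y' → y' ∈ range f := by
  rintro ⟨f, hf, hinv⟩
  obtain ⟨y, hy, hne⟩ := exists_rel_ne (f (.inl default))
  exact hne <| eq_of_invariant_range_of_singleton_class (fun x x' => (hf x x').2) hinv
    (fun _ => eq_of_inl_rel) hy

end BlockRel

theorem E16_eq_blockRel : E16 = BlockRel Unit := by
  funext x y
  rcases x with a | p <;> rcases y with b | q <;> simp [E16]

theorem F16_eq_blockRel : F16 = BlockRel (Fin 2) := by
  funext x y
  rcases x with a | p <;> rcases y with b | q <;> simp [F16]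

theorem stmt16 :
    Equivalence E16 ∧ Equivalence F16 ∧
    (∃ φ : X16 → Y16, Function.Injective φ ∧ ∀ x x' : X16, E16 x x' ↔ F16 (φ x) (φ x')) ∧
    (∃ ψ : Y16 → X16, Function.Injective ψ ∧ ∀ y y' : Y16, F16 y y' ↔ E16 (ψ y) (ψ y')) ∧
    ¬ ∃ φ : X16 → Y16, (∀ x x' : X16, E16 x x' ↔ F16 (φ x) (φ x')) ∧
        ∀ y y' : Y16, y ∈ Set.range φ → F16 y y' → y' ∈ Set.range φ := by
  rw [E16_eq_blockRel, F16_eq_blockRel]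
  let φ : BlockRel Unit ↪r BlockRel (Fin 2) := BlockRel.sumMapEmbedding (Embedding.punit 0)
  let ψ : BlockRel (Fin 2) ↪r BlockRel Unit := BlockRel.shiftEmbedding Fin.valEmbedding
  exact ⟨BlockRel.equivalence, BlockRel.equivalence,
    ⟨φ, φ.injective, fun _ _ => φ.map_rel_iff.symm⟩,
    ⟨ψ, ψ.injective, fun _ _ => ψ.map_rel_iff.symm⟩,
    BlockRel.not_exists_invariant_reduction⟩
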